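/- The AoI forecast vector defined by a_{k+l|k} = a_k + l for l = 1,…,k_τ and a_{k+l|k} = l − k_f + 1 for l > k_τ (with 1 ≤ k_f ≤ k_τ) dominates the true AoI: if the actual transmission succeeds at some time k + m with k_f ≤ m ≤ k_τ (and at no earlier time), then the true AoI satisfies a_{k+l} ≤ a_{k+l|k} for all l ≥ 1. -/

import Mathlib

/-!
The age of information grows by at most one per step, so `a l ≤ a 0 + l` always; and the
success at `m` resets it to `1`, so `a l ≤ l - m ≤ l - k_f + 1` for every `l > m`, in
particular for every `l > k_τ`.
-/

section AgeOfInformation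

variable {a b : ℕ → ℕ} (hrec : ∀ l, a (l + 1) = 1 + a l * (1 - b l))
include hrec

lemma aoi_succ_le (l : ℕ) : a (l + 1) ≤ a l + 1 := by
  rw [hrec]
  have : a l * (1 - b l) ≤ a l := mul_le_of_le_one_right (Nat.zero_le _) (Nat.sub_le 1 (b l))
  omega

lemma aoi_add_le (n l : ℕ) : a (n + l) ≤ a n + l := by
  induction l with
  | zero => simp
  | succ l ih =>
    rw [← add_assoc]
    have := aoi_succ_le hrec (n + l)
    omega

lemma aoi_succ_eq_one_of_success {m : ℕ} (hsucc : b m = 1) : a (m + 1) = 1 := by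
  simp [hrec, hsucc]

lemma aoi_le_sub_of_success {m l : ℕ} (hsucc : b m = 1) (hml : m < l) : a l ≤ l - m := by
  obtain ⟨j, rfl⟩ := Nat.exists_eq_add_of_lt hml
  rw [add_right_comm]
  have := aoi_add_le hrec (m + 1) j
  rw [aoi_succ_eq_one_of_success hrec hsucc] at this
  omega

end AgeOfInformation

theorem stmt_11_general (a b : ℕ → ℕ) (kf kτ m : ℕ)
    (hrec : ∀ l, a (l + 1) = 1 + a l * (1 - b l))
    (hm1 : kf ≤ m) (hm2 : m ≤ kτ)
    (hsucc : b m = 1) :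
    ∀ l, 1 ≤ l → a l ≤ (if l ≤ kτ then a 0 + l else l - kf + 1) := by
  intro l _
  split_ifs with hl
  · simpa using aoi_add_le hrec 0 l
  · have := aoi_le_sub_of_success hrec hsucc (l := l) (by omega)
    omega

/-- Robustness of the AoI forecast: if the actual (first) transmission success
occurs at step `m` with `k_f ≤ m ≤ k_τ`, then the true AoI is dominated by the
forecast `a_{k+l|k} = a_k + l` for `l ≤ k_τ` and `a_{k+l|k} = l - k_f + 1`
for `l > k_τ`. -/
theorem stmt_11 (a b : ℕ → ℕ) (kf kτ m : ℕ)
    (hb : ∀ l, b l ≤ 1)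
    (ha0 : 1 ≤ a 0)
    (hrec : ∀ l, a (l + 1) = 1 + a l * (1 - b l))
    (hkf : 1 ≤ kf) (hm1 : kf ≤ m) (hm2 : m ≤ kτ)
    (hsucc : b m = 1) (hearly : ∀ l < m, b l = 0) :
    ∀ l, 1 ≤ l → a l ≤ (if l ≤ kτ then a 0 + l else l - kf + 1) :=
  stmt_11_general a b kf kτ m hrec hm1 hm2 hsucc
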